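/- For γ > 1/2 and β > 0, e^{t^β} ∫_{-∞}^{√2 t^β − t^{γβ}} (2π t^β)^{-1/2} e^{-x²/(2t^β)} (√2 t^β − x) e^{-√2(√2 t^β − x)} dx = (t^{β/2}/√(2π)) e^{-t^{β(2γ−1)}/2}, and this quantity tends to 0 as t → ∞. -/

import Mathlib

open Filter Real MeasureTheory Set Topology

/-!
With `s = t^β`, completing the square gives
`e^{-x²/(2s)} e^{-√2(√2 s - x)} = e^{-s} e^{-(√2 s - x)²/(2s)}`: the factor `e^{-s}` cancels
`e^{t^β}`, and what remains is the first moment of a Gaussian centred at `√2 s`, whose tail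
integral has the closed-form primitive `s e^{-(√2 s - x)²/(2s)}`. At the upper limit
`√2 s - t^{γβ}` this gives `e^{-t^{2γβ}/(2t^β)}`, which beats the polynomial prefactor `t^{β/2}`
because `2γ - 1 > 0`.
-/

section GaussianFirstMoment

variable {s : ℝ} (c : ℝ)

theorem hasDerivAt_mul_exp_neg_sub_sq_div (hs : s ≠ 0) (x : ℝ) :
    HasDerivAt (fun x => s * exp (-(c - x) ^ 2 / (2 * s)))
      ((c - x) * exp (-(c - x) ^ 2 / (2 * s))) x := by
  have hexponent : HasDerivAt (fun x => -(c - x) ^ 2 / (2 * s)) ((c - x) / s) x := by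
    refine ((((hasDerivAt_id' x).const_sub c).fun_pow 2).fun_neg.div_const (2 * s)).congr_deriv ?_
    field_simp
    ring
  refine (hexponent.exp.const_mul s).congr_deriv ?_
  field_simp

theorem integrable_sub_mul_exp_neg_sub_sq_div (hs : 0 < s) :
    Integrable fun x => (c - x) * exp (-(c - x) ^ 2 / (2 * s)) := by
  have h :=
    ((integrable_mul_exp_neg_mul_sq (b := 1 / (2 * s)) (by positivity)).comp_add_left c).comp_neg
  refine h.congr (Eventually.of_forall fun x => ?_)
  simp only [← sub_eq_add_neg]
  congr 2
  ring

theorem tendsto_mul_exp_neg_sub_sq_div_atBot (hs : 0 < s) :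
    Tendsto (fun x => s * exp (-(c - x) ^ 2 / (2 * s))) atBot (𝓝 0) := by
  have hsub : Tendsto (fun x : ℝ => c - x) atBot atTop :=
    tendsto_atTop_add_const_left _ c tendsto_neg_atBot_atTop
  have hexponent : Tendsto (fun x => -(c - x) ^ 2 / (2 * s)) atBot atBot := by
    simp only [neg_div]
    exact tendsto_neg_atTop_atBot.comp (((tendsto_pow_atTop two_ne_zero).comp hsub).atTop_div_const
      (by positivity))
  simpa using (tendsto_exp_atBot.comp hexponent).const_mul s

theorem integral_Iic_sub_mul_exp_neg_sub_sq_div (hs : 0 < s) (b : ℝ) :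
    ∫ x in Iic b, (c - x) * exp (-(c - x) ^ 2 / (2 * s)) = s * exp (-(c - b) ^ 2 / (2 * s)) := by
  rw [integral_Iic_of_hasDerivAt_of_tendsto'
    (fun x _ => hasDerivAt_mul_exp_neg_sub_sq_div c hs.ne' x)
    (integrable_sub_mul_exp_neg_sub_sq_div c hs).integrableOn
    (tendsto_mul_exp_neg_sub_sq_div_atBot c hs), sub_zero]

end GaussianFirstMoment

theorem exp_neg_sq_div_mul_exp_neg_mul_sub {s : ℝ} (hs : s ≠ 0) (m x : ℝ) :
    exp (-x ^ 2 / (2 * s)) * exp (-m * (m * s - x)) =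
      exp (-(m ^ 2 * s / 2)) * exp (-(m * s - x) ^ 2 / (2 * s)) := by
  rw [← exp_add, ← exp_add]
  congr 1
  field_simp
  ring

theorem sqrt_mul_rpow {a t : ℝ} (ha : 0 ≤ a) (ht : 0 ≤ t) (β : ℝ) :
    √(a * t ^ β) = √a * t ^ (β / 2) := by
  rw [sqrt_mul ha, sqrt_eq_rpow (t ^ β), ← rpow_mul ht, mul_one_div]

theorem rpow_mul_sq_div_rpow {t : ℝ} (ht : 0 < t) (γ β : ℝ) :
    (t ^ (γ * β)) ^ 2 / t ^ β = t ^ (β * (2 * γ - 1)) := by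
  rw [← rpow_natCast, ← rpow_mul ht.le, ← rpow_sub ht]
  congr 1
  push_cast
  ring

theorem tendsto_rpow_mul_exp_neg_mul_rpow_atTop (p : ℝ) {b δ : ℝ} (hb : 0 < b) (hδ : 0 < δ) :
    Tendsto (fun t : ℝ => t ^ p * exp (-b * t ^ δ)) atTop (𝓝 0) := by
  refine ((tendsto_rpow_mul_exp_neg_mul_atTop_nhds_zero (p / δ) b hb).comp
    (tendsto_rpow_atTop hδ)).congr' ?_
  filter_upwards [eventually_ge_atTop 0] with t ht
  rw [Function.comp_apply, ← rpow_mul ht, mul_div_cancel₀ p hδ.ne']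

/-- For γ > 1/2 and β > 0, the Gaussian first-moment integral
`e^{t^β} ∫_{-∞}^{√2 t^β − t^{γβ}} (2π t^β)^{-1/2} e^{-x²/(2t^β)} (√2 t^β − x) e^{-√2(√2 t^β − x)} dx`
equals `(t^{β/2}/√(2π)) e^{-t^{β(2γ−1)}/2}` (for every t > 1), and this quantity
tends to 0 as t → ∞. -/
theorem gaussian_first_moment_tail (γ β : ℝ) (hγ : 1 / 2 < γ) (hβ : 0 < β) :
    (∀ t : ℝ, 1 < t →
      Real.exp (t ^ β) *
        ∫ x in Set.Iic (Real.sqrt 2 * t ^ β - t ^ (γ * β)),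
          Real.exp (-x ^ 2 / (2 * t ^ β)) / Real.sqrt (2 * π * t ^ β) *
            (Real.sqrt 2 * t ^ β - x) *
            Real.exp (-(Real.sqrt 2) * (Real.sqrt 2 * t ^ β - x))
      = t ^ (β / 2) / Real.sqrt (2 * π) * Real.exp (-(t ^ (β * (2 * γ - 1))) / 2)) ∧
    Tendsto
      (fun t : ℝ => t ^ (β / 2) / Real.sqrt (2 * π) *
        Real.exp (-(t ^ (β * (2 * γ - 1))) / 2)) atTop (nhds 0) := by
  refine ⟨fun t ht => ?_, ?_⟩
  · have ht0 : 0 < t := one_pos.trans ht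
    set s := t ^ β
    have hs : 0 < s := rpow_pos_of_pos ht0 β
    have hsqrt2 : √2 ^ 2 = 2 := sq_sqrt zero_le_two
    calc exp s * ∫ x in Iic (√2 * s - t ^ (γ * β)),
          exp (-x ^ 2 / (2 * s)) / √(2 * π * s) * (√2 * s - x) * exp (-√2 * (√2 * s - x))
        = exp s * ∫ x in Iic (√2 * s - t ^ (γ * β)),
            exp (-s) / √(2 * π * s) * ((√2 * s - x) * exp (-(√2 * s - x) ^ 2 / (2 * s))) := by
          congr 1
          refine setIntegral_congr_fun measurableSet_Iic fun x _ => ?_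
          have htilt := exp_neg_sq_div_mul_exp_neg_mul_sub hs.ne' (√2) x
          rw [hsqrt2, mul_div_cancel_left₀ s two_ne_zero] at htilt
          linear_combination (√2 * s - x) / √(2 * π * s) * htilt
      _ = exp s * exp (-s) * (s / √(2 * π * s)) * exp (-((t ^ (γ * β)) ^ 2 / s) / 2) := by
          rw [integral_const_mul, integral_Iic_sub_mul_exp_neg_sub_sq_div _ hs, sub_sub_cancel]
          field_simp
      _ = t ^ (β / 2) / √(2 * π) * exp (-(t ^ (β * (2 * γ - 1))) / 2) := by
          rw [← exp_add, add_neg_cancel, exp_zero, one_mul, rpow_mul_sq_div_rpow ht0,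
            sqrt_mul_rpow (by positivity) ht0.le, show s = t ^ (β / 2) * t ^ (β / 2) by
              rw [← rpow_add ht0, add_halves]]
          field_simp
  · have hδ : 0 < β * (2 * γ - 1) := mul_pos hβ (by linarith)
    have h := (tendsto_rpow_mul_exp_neg_mul_rpow_atTop (β / 2) one_half_pos hδ).div_const √(2 * π)
    rw [zero_div] at h
    refine h.congr fun t => ?_
    ring_nf
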